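/- With the magnetic Weyl system (W^A(Y)u)(x) = e^{−i(x+y/2)·η} e^{−i∫₀¹ A(x+sy)·y ds} u(x+y), one has for all X = (x,ξ), Y = (y,η) the twisted composition law W^A(X) W^A(Y) = e^{(i/2)σ(X,Y)} ω^B(Q; x, y) W^A(X+Y), where ω^B(q;x,y) = e^{−iΓ^B(⟨q, q+x, q+x+y⟩)} is multiplication by the exponential of minus the flux of B = dA through the triangle with vertices q, q+x, q+x+y; equivalently, ω^B(q;x,y) = exp(−i(Γ^A([q,q+x]) + Γ^A([q+x,q+x+y]) − Γ^A([q,q+x+y]))). -/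

import Mathlib

open MeasureTheory Complex

noncomputable section

abbrev E (d : ℕ) := EuclideanSpace ℝ (Fin d)

/-- Circulation `Γ^A([x,z]) = ∫₀¹ A(x + s(z−x))·(z−x) ds` of `A` along the segment `[x,z]`. -/
def circA {d : ℕ} (A : E d → E d) (x z : E d) : ℝ :=
  ∫ s in (0:ℝ)..1, (inner ℝ (A (x + s • (z - x))) (z - x) : ℝ)

/-- The magnetic Weyl operator
`(W^A(Y)u)(x) = e^{−i(x + y/2)·η} e^{−iΓ^A([x,x+y])} u(x + y)`. -/
def mweyl {d : ℕ} (A : E d → E d) (Y : E d × E d) (u : E d → ℂ) : E d → ℂ :=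
  fun x => Complex.exp (-Complex.I * (((inner ℝ (x + (1/2 : ℝ) • Y.1) Y.2 : ℝ)) : ℂ)) *
    Complex.exp (-Complex.I * ((circA A x (x + Y.1) : ℝ) : ℂ)) * u (x + Y.1)

/-- Smooth with polynomially bounded derivatives of all orders. -/
def PolyBoundedDerivs {d : ℕ} {F : Type*} [NormedAddCommGroup F] [NormedSpace ℝ F]
    (A : E d → F) : Prop :=
  ContDiff ℝ (⊤ : ℕ∞) A ∧
    ∀ n : ℕ, ∃ C k : ℝ, ∀ x : E d, ‖iteratedFDeriv ℝ n A x‖ ≤ C * (1 + ‖x‖) ^ k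

def symp {d : ℕ} (X Y : E d × E d) : ℝ :=
  (inner ℝ X.2 Y.1 : ℝ) - (inner ℝ X.1 Y.2 : ℝ)

/-- The exponential of minus the magnetic flux of `B = dA` through the triangle
`⟨a,b,c⟩`, written via Stokes' theorem as circulations of `A` along the edges. -/
def fluxPhase {d : ℕ} (A : E d → E d) (a b c : E d) : ℂ :=
  Complex.exp (-Complex.I * ((circA A a b + circA A b c - circA A a c : ℝ) : ℂ))

/-- Twisted composition law of the magnetic Weyl system:
`W^A(X) W^A(Y) = e^{(i/2)σ(X,Y)} ω^B(Q; x, y) W^A(X+Y)`. -/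
theorem mweyl_composition (d : ℕ) (A : E d → E d) (hA : PolyBoundedDerivs A)
    (X Y : E d × E d) (u : E d → ℂ) :
    mweyl A X (mweyl A Y u) = fun q =>
      Complex.exp (Complex.I / 2 * ((symp X Y : ℝ) : ℂ)) *
        fluxPhase A q (q + X.1) (q + X.1 + Y.1) * mweyl A (X + Y) u q := by
  funext q
  simp only [mweyl, fluxPhase, symp, Prod.fst_add, Prod.snd_add, ← add_assoc]
  rw [← Complex.exp_add, ← Complex.exp_add, ← Complex.exp_add, ← mul_assoc, ← mul_assoc,
    ← Complex.exp_add, ← Complex.exp_add]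
  congr 2
  push_cast
  simp only [inner_add_left, inner_add_right, real_inner_smul_left]
  push_cast
  rw [← Complex.exp_add]
  congr 1
  rw [real_inner_comm X.2 Y.1]
  ring
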